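/- Let V be a nontrivial irreducible weight module over the twisted Heisenberg-Virasoro algebra 𝔏 (all weight spaces finite-dimensional). If V is unitary with respect to θ⁺_{α,γ} for some positive real number α and some γ ∈ ℝ, then V is unitary with respect to θ⁺_{1,γ}. -/

import Mathlib

/-- Index type for the standard basis of the twisted Heisenberg-Virasoro algebra. -/
inductive HVIx : Type
  | l : ℤ → HVIx
  | i : ℤ → HVIx
  | cl : HVIx
  | ci : HVIx
  | cli : HVIx

/-- A complex Lie algebra `𝔏` equipped with the structure of the twisted
Heisenberg-Virasoro algebra: a basis `{L_m, I_m, C_L, C_I, C_LI}` with the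
defining Lie brackets. -/
structure THV (𝔏 : Type*) [LieRing 𝔏] [LieAlgebra ℂ 𝔏] where
  b : Module.Basis HVIx ℂ 𝔏
  bracket_LL : ∀ m n : ℤ, ⁅b (.l m), b (.l n)⁆ =
    ((n : ℂ) - (m : ℂ)) • b (.l (m + n)) +
      (if m + n = 0 then (((m : ℂ) ^ 3 - (m : ℂ)) / 12) • b .cl else 0)
  bracket_II : ∀ m n : ℤ, ⁅b (.i m), b (.i n)⁆ =
    (if m + n = 0 then (n : ℂ) • b .ci else 0)
  bracket_LI : ∀ m n : ℤ, ⁅b (.l m), b (.i n)⁆ =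
    (n : ℂ) • b (.i (m + n)) +
      (if m + n = 0 then ((m : ℂ) ^ 2 - (m : ℂ)) • b .cli else 0)
  central_CL : ∀ x : 𝔏, ⁅x, b .cl⁆ = 0
  central_CI : ∀ x : 𝔏, ⁅x, b .ci⁆ = 0
  central_CLI : ∀ x : 𝔏, ⁅x, b .cli⁆ = 0

namespace THV

variable {𝔏 : Type*} [LieRing 𝔏] [LieAlgebra ℂ 𝔏] (s : THV 𝔏)

/-- The element `L n`. -/
noncomputable def L (n : ℤ) : 𝔏 := s.b (.l n)
/-- The element `I n`. -/
noncomputable def I (n : ℤ) : 𝔏 := s.b (.i n)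
/-- The central element `C_L`. -/
noncomputable def CL : 𝔏 := s.b .cl
/-- The central element `C_I`. -/
noncomputable def CI : 𝔏 := s.b .ci
/-- The central element `C_LI`. -/
noncomputable def CLI : 𝔏 := s.b .cli

end THV

/-- `θ` is a conjugate-linear anti-involution of the complex Lie algebra `𝔤`. -/
structure IsConjAntiInvol (𝔤 : Type*) [LieRing 𝔤] [LieAlgebra ℂ 𝔤] (θ : 𝔤 → 𝔤) : Prop where
  map_add : ∀ x y : 𝔤, θ (x + y) = θ x + θ y
  map_smul : ∀ (c : ℂ) (x : 𝔤), θ (c • x) = (starRingEnd ℂ) c • θ x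
  map_bracket : ∀ x y : 𝔤, θ ⁅x, y⁆ = ⁅θ y, θ x⁆
  invol : ∀ x : 𝔤, θ (θ x) = x

/-- A `𝔤`-module `V` is unitary with respect to `θ` if there is a positive definite
Hermitian form `⟨·,·⟩` (linear in the first argument) with `⟨x·u, v⟩ = ⟨u, θ(x)·v⟩`. -/
def IsUnitaryWith (𝔤 : Type*) [LieRing 𝔤] [LieAlgebra ℂ 𝔤]
    (V : Type*) [AddCommGroup V] [Module ℂ V] [LieRingModule 𝔤 V]
    (θ : 𝔤 → 𝔤) : Prop :=
  ∃ B : V → V → ℂ,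
    (∀ u v w : V, B (u + v) w = B u w + B v w) ∧
    (∀ (c : ℂ) (u v : V), B (c • u) v = c * B u v) ∧
    (∀ u v : V, B v u = (starRingEnd ℂ) (B u v)) ∧
    (∀ v : V, v ≠ 0 → 0 < (B v v).re) ∧
    (∀ (x : 𝔤) (u v : V), B ⁅x, u⁆ v = B u ⁅θ x, v⁆)


namespace THV

variable {𝔏 : Type*} [LieRing 𝔏] [LieAlgebra ℂ 𝔏]

/-- Images of the basis vectors under `θ⁺_{α,γ}`. -/
noncomputable def thetaPlusB (s : THV 𝔏) (α γ : ℝ) : HVIx → 𝔏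
  | .l n => ((α : ℂ) ^ n) • s.L (-n)
  | .i n => if n = 0 then
      Complex.exp (Complex.I * (γ : ℂ)) • s.I 0 +
        (2 * Complex.exp (Complex.I * (γ : ℂ))) • s.CLI
    else ((α : ℂ) ^ n * Complex.exp (Complex.I * (γ : ℂ))) • s.I (-n)
  | .cl => s.CL
  | .ci => Complex.exp (2 * Complex.I * (γ : ℂ)) • s.CI
  | .cli => -(Complex.exp (Complex.I * (γ : ℂ)) • s.CLI)

/-- The map `θ⁺_{α,γ}`, defined on the basis elements by
`θ⁺(L n) = αⁿ L₋ₙ`, `θ⁺(C_L) = C_L`, `θ⁺(I m) = αᵐ e^{iγ} I₋ₘ (m ≠ 0)`,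
`θ⁺(I 0) = e^{iγ} I 0 + 2 e^{iγ} C_LI`, `θ⁺(C_I) = e^{2iγ} C_I`,
`θ⁺(C_LI) = -e^{iγ} C_LI`, and extended conjugate-linearly. -/
noncomputable def thetaPlus (s : THV 𝔏) (α γ : ℝ) : 𝔏 → 𝔏 :=
  fun x => (s.b.repr x).sum fun ix c => (starRingEnd ℂ) c • s.thetaPlusB α γ ix

end THV

namespace THV

variable {𝔏 : Type*} [LieRing 𝔏] [LieAlgebra ℂ 𝔏]

/-- The spanning family of the Cartan subalgebra `𝔥 = span{L 0, I 0, C_L, C_I, C_LI}`. -/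
noncomputable def hvec (s : THV 𝔏) : Fin 5 → 𝔏 := ![s.L 0, s.I 0, s.CL, s.CI, s.CLI]

/-- The simultaneous eigenspace (weight space) of the Cartan subalgebra `𝔥` on a module `V`,
for the system of eigenvalues `χ`. -/
noncomputable def wtSpace (s : THV 𝔏) (V : Type*) [AddCommGroup V] [Module ℂ V]
    [LieRingModule 𝔏 V] [LieModule ℂ 𝔏 V] (χ : Fin 5 → ℂ) : Submodule ℂ V :=
  ⨅ j : Fin 5, Module.End.eigenspace (LieModule.toEnd ℂ 𝔏 V (s.hvec j)) (χ j)

end THV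


/-!
On each homogeneous basis vector of degree `d` (the amount by which it shifts `L₀`-eigenvalues),
`θ⁺_{α,γ}` is `αᵈ` times `θ⁺_{1,γ}`. The weight-space hypothesis decomposes `V` into
`L₀`-eigenspaces `V_μ`; let `S` act on `V_μ` by the positive real scalar `α^(-Re μ / 2)`. If
`⟨·,·⟩` is `θ⁺_{α,γ}`-invariant, then `⟨S·, S·⟩` is `θ⁺_{1,γ}`-invariant: for `y` of degree `d`,
`S` contributes `α^(-d/2)` on the left and `α^(d/2)` on the right, cancelling against `αᵈ`.
Since `S` is injective, `⟨S·, S·⟩` is still positive definite.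
-/

namespace LinearMap

variable {ι : Type*}

theorem ext_of_iSup_eq_top {R R₂ M N : Type*} [Semiring R] [Semiring R₂] [AddCommMonoid M]
    [Module R M] [AddCommMonoid N] [Module R₂ N] {σ : R →+* R₂} {E : ι → Submodule R M}
    (hE : ⨆ i, E i = ⊤) {f g : M →ₛₗ[σ] N}
    (h : ∀ i, ∀ x ∈ E i, f x = g x) : f = g :=
  ext_on (s := ⋃ i, (E i : Set M)) (by rw [← Submodule.iSup_eq_span, hE])
    fun _ hx => by obtain ⟨i, hi⟩ := Set.mem_iUnion.1 hx; exact h i _ hi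

theorem ext₂_of_iSup_eq_top {K V Q : Type*} [CommSemiring K] [AddCommMonoid V] [Module K V]
    [AddCommMonoid Q] [Module K Q] {τ : K →+* K} {E : ι → Submodule K V} (hE : ⨆ i, E i = ⊤)
    {f g : V →ₗ[K] V →ₛₗ[τ] Q}
    (h : ∀ i j, ∀ x ∈ E i, ∀ y ∈ E j, f x y = g x y) : f = g :=
  ext_of_iSup_eq_top hE fun i x hx => ext_of_iSup_eq_top hE fun j y hy => h i j x hx y hy

end LinearMap

namespace DirectSum.IsInternal

variable {ι K M : Type*} [DecidableEq ι] [Field K] [AddCommGroup M] [Module K M]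
  {E : ι → Submodule K M}

noncomputable def scale (hE : IsInternal E) (c : ι → K) : Module.End K M :=
  toModule K ι M (fun i => c i • (E i).subtype) ∘ₗ
    (LinearEquiv.ofBijective (coeLinearMap E) hE).symm.toLinearMap

theorem scale_apply_of_mem (hE : IsInternal E) (c : ι → K) {i : ι} {x : M} (hx : x ∈ E i) :
    hE.scale c x = c i • x := by
  have hsymm : (LinearEquiv.ofBijective (coeLinearMap E) hE).symm x = lof K ι _ i ⟨x, hx⟩ := by
    rw [LinearEquiv.symm_apply_eq]
    exact (coeLinearMap_of E i ⟨x, hx⟩).symm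
  simp [scale, hsymm, toModule_lof]

theorem scale_comp_scale (hE : IsInternal E) (c d : ι → K) :
    hE.scale c ∘ₗ hE.scale d = hE.scale (c * d) :=
  LinearMap.ext_of_iSup_eq_top hE.submodule_iSup_eq_top fun i x hx => by
    simp [scale_apply_of_mem hE _ hx, scale_apply_of_mem hE _ (Submodule.smul_mem _ _ hx),
      smul_smul]

theorem scale_injective (hE : IsInternal E) {c : ι → K} (hc : ∀ i, c i ≠ 0) :
    Function.Injective (hE.scale c) := by
  have hinv : hE.scale c⁻¹ ∘ₗ hE.scale c = LinearMap.id := by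
    rw [scale_comp_scale]
    exact LinearMap.ext_of_iSup_eq_top hE.submodule_iSup_eq_top fun i x hx => by
      simp [scale_apply_of_mem hE _ hx, hc i]
  exact Function.LeftInverse.injective (g := hE.scale c⁻¹) (LinearMap.congr_fun hinv)

end DirectSum.IsInternal

namespace LieModule

variable {R L M : Type*} [CommRing R] [LieRing L] [LieAlgebra R L] [AddCommGroup M] [Module R M]
  [LieRingModule L M] [LieModule R L M]

theorem lie_mem_eigenspace_add {h y : L} {d μ : R} (hy : ⁅h, y⁆ = d • y) {u : M}
    (hu : u ∈ (toEnd R L M h).eigenspace μ) : ⁅y, u⁆ ∈ (toEnd R L M h).eigenspace (μ + d) := by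
  rw [Module.End.mem_eigenspace_iff, toEnd_apply_apply] at hu ⊢
  rw [leibniz_lie, hy, hu, smul_lie, lie_smul, add_smul, add_comm]

end LieModule

section Unitary

open ComplexConjugate

variable {𝔤 V : Type*} [LieRing 𝔤] [LieAlgebra ℂ 𝔤] [AddCommGroup V] [Module ℂ V]
  [LieRingModule 𝔤 V]

theorem isUnitaryWith_iff {θ : 𝔤 → 𝔤} :
    IsUnitaryWith 𝔤 V θ ↔ ∃ B : V →ₗ[ℂ] V →ₗ⋆[ℂ] ℂ,
      (∀ u v, B v u = conj (B u v)) ∧ (∀ v, v ≠ 0 → 0 < (B v v).re) ∧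
        ∀ x u v, B ⁅x, u⁆ v = B u ⁅θ x, v⁆ := by
  constructor
  · rintro ⟨B, hadd, hsmul, hherm, hpos, hinv⟩
    refine ⟨LinearMap.mk₂'ₛₗ _ _ B hadd hsmul (fun u v w => ?_) (fun c u v => ?_),
      hherm, hpos, hinv⟩
    · rw [hherm (v + w), hadd, map_add, ← hherm, ← hherm]
    · rw [hherm (c • v), hsmul, map_mul, ← hherm, smul_eq_mul]
  · rintro ⟨B, hherm, hpos, hinv⟩
    exact ⟨fun u v => B u v, by simp, by simp, hherm, hpos, hinv⟩

theorem isUnitaryWith_of_injective {θ : 𝔤 → 𝔤} (B : V →ₗ[ℂ] V →ₗ⋆[ℂ] ℂ)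
    (hherm : ∀ u v, B v u = conj (B u v)) (hpos : ∀ v, v ≠ 0 → 0 < (B v v).re)
    {S : V →ₗ[ℂ] V} (hS : Function.Injective S)
    (hinv : ∀ x u v, B (S ⁅x, u⁆) (S v) = B (S u) (S ⁅θ x, v⁆)) :
    IsUnitaryWith 𝔤 V θ :=
  isUnitaryWith_iff.2 ⟨(B ∘ₗ S).compl₂ S, fun u v => hherm (S u) (S v),
    fun v hv => hpos (S v) ((map_ne_zero_iff S hS).2 hv), hinv⟩

variable [LieModule ℂ 𝔤 V]

theorem sesqForm_lie_eq_of_basis {ι : Type*} (b : Module.Basis ι ℂ 𝔤) (θ : 𝔤 →ₗ⋆[ℂ] 𝔤)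
    (B : V →ₗ[ℂ] V →ₗ⋆[ℂ] ℂ) (h : ∀ i u v, B ⁅b i, u⁆ v = B u ⁅θ (b i), v⁆) (x : 𝔤) (u v : V) :
    B ⁅x, u⁆ v = B u ⁅θ x, v⁆ := by
  have hx : x ∈ Submodule.span ℂ (Set.range b) := by simp [b.span_eq]
  induction hx using Submodule.span_induction generalizing u v with
  | mem x hx => obtain ⟨i, rfl⟩ := hx; exact h i u v
  | zero => simp
  | add x y _ _ hx hy => simp [add_lie, hx, hy]
  | smul c x _ hx => simp [smul_lie, hx]

end Unitary

section EigenScaling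

open ComplexConjugate LieModule

variable {𝔤 V : Type*} [LieRing 𝔤] [LieAlgebra ℂ 𝔤] [AddCommGroup V] [Module ℂ V]
  [LieRingModule 𝔤 V] [LieModule ℂ 𝔤 V] {h : 𝔤}

noncomputable def eigenScale (hE : DirectSum.IsInternal (toEnd ℂ 𝔤 V h).eigenspace)
    (α : ℝ) : Module.End ℂ V :=
  hE.scale fun μ => ((α ^ (-μ.re / 2) : ℝ) : ℂ)

variable (hE : DirectSum.IsInternal (toEnd ℂ 𝔤 V h).eigenspace) {α : ℝ}

theorem eigenScale_injective (hα : 0 < α) : Function.Injective (eigenScale hE α) :=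
  hE.scale_injective fun _ => Complex.ofReal_ne_zero.2 (Real.rpow_pos_of_pos hα _).ne'

theorem sesqForm_eigenScale_lie_eq {θ : 𝔤 → 𝔤} (B : V →ₗ[ℂ] V →ₗ⋆[ℂ] ℂ)
    (hB : ∀ x u v, B ⁅x, u⁆ v = B u ⁅θ x, v⁆) (hα : 0 < α) {y z : 𝔤} {d : ℤ}
    (hy : ⁅h, y⁆ = (d : ℂ) • y) (hz : ⁅h, z⁆ = (-d : ℂ) • z) (hθ : θ y = (α : ℂ) ^ d • z)
    (u v : V) :
    B (eigenScale hE α ⁅y, u⁆) (eigenScale hE α v) =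
      B (eigenScale hE α u) (eigenScale hE α ⁅z, v⁆) := by
  set S := eigenScale hE α
  suffices (B ∘ₗ S ∘ₗ toEnd ℂ 𝔤 V y).compl₂ S = (B ∘ₗ S).compl₂ (S ∘ₗ toEnd ℂ 𝔤 V z) from
    LinearMap.congr_fun₂ this u v
  refine LinearMap.ext₂_of_iSup_eq_top hE.submodule_iSup_eq_top fun μ ν u hu v hv => ?_
  simp only [LinearMap.compl₂_apply, LinearMap.comp_apply, toEnd_apply_apply, S, eigenScale,
    hE.scale_apply_of_mem _ hu, hE.scale_apply_of_mem _ hv,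
    hE.scale_apply_of_mem _ (lie_mem_eigenspace_add hy hu),
    hE.scale_apply_of_mem _ (lie_mem_eigenspace_add hz hv)]
  simp only [map_smul, map_smulₛₗ, hB, hθ, smul_lie, LinearMap.smul_apply, smul_eq_mul,
    map_zpow₀, Complex.conj_ofReal]
  have hpow : ((α ^ (-ν.re / 2) * (α ^ (-(μ + d).re / 2) * α ^ d) : ℝ) : ℂ) =
      ((α ^ (-(ν + -d).re / 2) * α ^ (-μ.re / 2) : ℝ) : ℂ) := by
    rw [← Real.rpow_intCast, ← Real.rpow_add hα, ← Real.rpow_add hα, ← Real.rpow_add hα]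
    congr 2
    simp only [Complex.add_re, Complex.neg_re, Complex.intCast_re]
    ring
  push_cast at hpow
  linear_combination B u ⁅z, v⁆ * hpow

end EigenScaling

def HVIx.degree : HVIx → ℤ
  | .l m => m
  | .i m => m
  | _ => 0

namespace THV

open LieModule

variable {𝔏 : Type*} [LieRing 𝔏] [LieAlgebra ℂ 𝔏] (s : THV 𝔏)

theorem L_zero_lie_b (ix : HVIx) : ⁅s.L 0, s.b ix⁆ = (ix.degree : ℂ) • s.b ix := by
  cases ix with
  | l m => simpa [L, HVIx.degree] using s.bracket_LL 0 m
  | i m => simpa [L, HVIx.degree] using s.bracket_LI 0 m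
  | cl => simp [HVIx.degree, s.central_CL]
  | ci => simp [HVIx.degree, s.central_CI]
  | cli => simp [HVIx.degree, s.central_CLI]

theorem L_zero_lie_thetaPlusB (α γ : ℝ) (ix : HVIx) :
    ⁅s.L 0, s.thetaPlusB α γ ix⁆ = (-ix.degree : ℂ) • s.thetaPlusB α γ ix := by
  have hb : ∀ ix, ⁅s.b (.l 0), s.b ix⁆ = (ix.degree : ℂ) • s.b ix := s.L_zero_lie_b
  cases ix with
  | i m =>
    by_cases hm : m = 0 <;>
      simp [thetaPlusB, L, I, CLI, hm, lie_smul, hb, HVIx.degree, smul_smul, mul_comm]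
  | _ => simp [thetaPlusB, L, CL, CI, CLI, lie_smul, hb, HVIx.degree, smul_smul, mul_comm]

theorem thetaPlusB_eq_zpow_smul (α γ : ℝ) (ix : HVIx) :
    s.thetaPlusB α γ ix = (α : ℂ) ^ ix.degree • s.thetaPlusB 1 γ ix := by
  cases ix with
  | l n => simp [thetaPlusB, HVIx.degree]
  | i n => by_cases hn : n = 0 <;> simp [thetaPlusB, HVIx.degree, hn, smul_smul]
  | _ => simp [thetaPlusB, HVIx.degree]

noncomputable def thetaPlusₛₗ (α γ : ℝ) : 𝔏 →ₗ⋆[ℂ] 𝔏 where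
  toFun := s.thetaPlus α γ
  map_add' x y := by
    classical
    simp only [thetaPlus, map_add]
    exact Finsupp.sum_add_index (by simp) (by simp [add_smul])
  map_smul' c x := by
    simp [thetaPlus, Finsupp.sum_smul_index, Finsupp.smul_sum, mul_smul]

theorem thetaPlusₛₗ_apply_b (α γ : ℝ) (ix : HVIx) :
    s.thetaPlusₛₗ α γ (s.b ix) = s.thetaPlusB α γ ix := by
  simp [thetaPlusₛₗ, thetaPlus]

theorem iSup_eigenspace_L_zero_eq_top {V : Type*} [AddCommGroup V] [Module ℂ V]
    [LieRingModule 𝔏 V] [LieModule ℂ 𝔏 V] (hwt : (⨆ χ : Fin 5 → ℂ, s.wtSpace V χ) = ⊤) :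
    ⨆ μ, (toEnd ℂ 𝔏 V (s.L 0)).eigenspace μ = ⊤ :=
  top_le_iff.1 <| hwt ▸ iSup_le fun χ => le_iSup_of_le (χ 0) (iInf_le (fun _ => _) 0)

end THV

theorem unitary_thetaPlus_one_general (𝔏 : Type*) [LieRing 𝔏] [LieAlgebra ℂ 𝔏] (s : THV 𝔏)
    (V : Type*) [AddCommGroup V] [Module ℂ V] [LieRingModule 𝔏 V] [LieModule ℂ 𝔏 V]
    (hwt : (⨆ χ : Fin 5 → ℂ, s.wtSpace V χ) = ⊤)
    (α γ : ℝ) (hα : 0 < α)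
    (hu : IsUnitaryWith 𝔏 V (s.thetaPlus α γ)) :
    IsUnitaryWith 𝔏 V (s.thetaPlus 1 γ) := by
  obtain ⟨B, hherm, hpos, hinv⟩ := isUnitaryWith_iff.1 hu
  have hE : DirectSum.IsInternal (LieModule.toEnd ℂ 𝔏 V (s.L 0)).eigenspace :=
    (DirectSum.isInternal_submodule_iff_iSupIndep_and_iSup_eq_top _).2
      ⟨Module.End.eigenspaces_iSupIndep _, s.iSup_eigenspace_L_zero_eq_top hwt⟩
  set S := eigenScale hE α
  refine isUnitaryWith_of_injective B hherm hpos (eigenScale_injective hE hα) fun x u v =>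
    sesqForm_lie_eq_of_basis s.b (s.thetaPlusₛₗ 1 γ) ((B ∘ₗ S).compl₂ S) (fun ix u v => ?_) x u v
  rw [s.thetaPlusₛₗ_apply_b]
  exact sesqForm_eigenScale_lie_eq hE B hinv hα (s.L_zero_lie_b ix)
    (s.L_zero_lie_thetaPlusB 1 γ ix)
    ((s.thetaPlusₛₗ_apply_b α γ ix).trans (s.thetaPlusB_eq_zpow_smul α γ ix)) u v

/-- Proposition 2.8 (ii): if a nontrivial irreducible weight `𝔏`-module (with
finite-dimensional weight spaces) is unitary for `θ⁺_{α,γ}` with `α > 0`,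
then it is unitary for `θ⁺_{1,γ}`. -/
theorem unitary_thetaPlus_one (𝔏 : Type*) [LieRing 𝔏] [LieAlgebra ℂ 𝔏] (s : THV 𝔏)
    (V : Type*) [AddCommGroup V] [Module ℂ V] [LieRingModule 𝔏 V] [LieModule ℂ 𝔏 V]
    (hnt : ∃ (y : 𝔏) (v : V), ⁅y, v⁆ ≠ 0)
    (hirr : LieModule.IsIrreducible ℂ 𝔏 V)
    (hwt : (⨆ χ : Fin 5 → ℂ, s.wtSpace V χ) = ⊤)
    (hfd : ∀ χ : Fin 5 → ℂ, FiniteDimensional ℂ (s.wtSpace V χ))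
    (α γ : ℝ) (hα : 0 < α)
    (hu : IsUnitaryWith 𝔏 V (s.thetaPlus α γ)) :
    IsUnitaryWith 𝔏 V (s.thetaPlus 1 γ) :=
  unitary_thetaPlus_one_general 𝔏 s V hwt α γ hα hu
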